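/- Let S be a nonempty subset of [m] and V a nonzero finitely generated C^m_G-module. Then t_0^S(D_S V) = t_0^S(V) − 1, where D_S := ⊕_{i∈S} D_i. -/

import Mathlib

open CategoryTheory Limits
open scoped TensorProduct
noncomputable section

@[ext] structure FIObj where
  n : ℕ

instance : Category FIObj where
  Hom a b := Fin a.n ↪ Fin b.n
  id _ := Function.Embedding.refl _
  comp f g := f.trans g

@[ext] structure FImObj (m : ℕ) where
  comp : Fin m → ℕ

instance (m : ℕ) : Category (FImObj m) where
  Hom x y := ∀ j, Fin (x.comp j) ↪ Fin (y.comp j)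
  id _ := fun _ => Function.Embedding.refl _
  comp f g := fun j => (f j).trans (g j)

abbrev FImG (m : ℕ) (G : Type) [Group G] := FImObj m × CategoryTheory.SingleObj G

@[simp] lemma FImObj.comp_def {m : ℕ} {x y z : FImObj m} (f : x ⟶ y) (g : y ⟶ z) (j : Fin m) :
    (f ≫ g) j = (f j).trans (g j) := rfl

@[simp] lemma FImObj.id_def {m : ℕ} (x : FImObj m) (j : Fin m) :
    (𝟙 x : x ⟶ x) j = Function.Embedding.refl _ := rfl

def shiftEmb (K : ℕ) {a b : ℕ} (f : Fin a ↪ Fin b) : Fin (a + K) ↪ Fin (b + K) :=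
  finSumFinEquiv.symm.toEmbedding.trans
    ((f.sumMap (Function.Embedding.refl (Fin K))).trans finSumFinEquiv.toEmbedding)

@[simp] lemma shiftEmb_castAdd (K : ℕ) {a b : ℕ} (f : Fin a ↪ Fin b) (x : Fin a) :
    shiftEmb K f (Fin.castAdd K x) = Fin.castAdd K (f x) := by
  simp [shiftEmb]

lemma shiftEmb_id (K a : ℕ) :
    shiftEmb K (Function.Embedding.refl (Fin a)) = Function.Embedding.refl _ := by
  ext x
  obtain ⟨y, rfl⟩ := finSumFinEquiv.surjective x
  cases y <;> simp [shiftEmb]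

lemma shiftEmb_trans (K : ℕ) {a b c : ℕ} (f : Fin a ↪ Fin b) (g : Fin b ↪ Fin c) :
    shiftEmb K (f.trans g) = (shiftEmb K f).trans (shiftEmb K g) := by
  ext x
  obtain ⟨y, rfl⟩ := finSumFinEquiv.surjective x
  cases y <;> simp [shiftEmb]

def addF (m : ℕ) (e : Fin m → ℕ) : FImObj m ⥤ FImObj m where
  obj x := ⟨fun j => x.comp j + e j⟩
  map f := fun j => shiftEmb (e j) (f j)
  map_id x := funext fun j => shiftEmb_id _ _
  map_comp f g := funext fun j => shiftEmb_trans _ _ _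

variable (m : ℕ) (G : Type) [Group G] (k : Type) [Field k]

/-- The `i`-th self-embedding functor `ι_i` (more generally, the self-embedding functor
attached to a vector `e` of shifts), extended to `C^m_G` by the identity on `G`. -/
def addFG (e : Fin m → ℕ) : FImG m G ⥤ FImG m G := (addF m e).prod (𝟭 _)

/-- The category of `C^m_G`-modules over `k`, i.e. of functors `C^m_G ⥤ Vect_k`. -/
abbrev ModG := FImG m G ⥤ ModuleCat.{0} k

instance : HasFiniteBiproducts (ModG m G k) := Abelian.hasFiniteBiproducts

/-- The shift functor attached to a shift vector `e`, given by precomposition with the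
self-embedding functor; `Σ_i` is recovered as `e = Pi.single i 1`. -/
def sigmaF (e : Fin m → ℕ) : ModG m G k ⥤ ModG m G k :=
  (Functor.whiskeringLeft _ _ _).obj (addFG m G e)

/-- The canonical morphism `x ⟶ ι_e(x)` in `C^m_G`. -/
def incHom (e : Fin m → ℕ) (x : FImG m G) : x ⟶ (addFG m G e).obj x :=
  (fun j => ⟨Fin.castAdd (e j), fun u v huv => Fin.castAdd_injective _ _ huv⟩, (1 : G))

lemma incHom_naturality (e : Fin m → ℕ) {x y : FImG m G} (f : x ⟶ y) :
    incHom m G e x ≫ (addFG m G e).map f = f ≫ incHom m G e y := by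
  refine Prod.ext ?_ ?_
  · funext j
    ext t
    exact congrArg Fin.val (shiftEmb_castAdd (e j) (f.1 j) t)
  · simp [incHom, addFG, CategoryTheory.SingleObj.comp_as_mul]

/-- The natural inclusion `V ⟶ Σ_e V`. -/
def incMapV (e : Fin m → ℕ) (V : ModG m G k) : V ⟶ (sigmaF m G k e).obj V where
  app x := V.map (incHom m G e x)
  naturality x y f := by
    dsimp [sigmaF]
    rw [← V.map_comp, ← V.map_comp, incHom_naturality]

/-- The natural transformation `𝟭 ⟶ Σ_e` on the category of `C^m_G`-modules. -/
def incNat (e : Fin m → ℕ) : 𝟭 (ModG m G k) ⟶ sigmaF m G k e where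
  app V := incMapV m G k e V
  naturality V W φ := by
    apply NatTrans.ext; funext x
    exact (φ.naturality (incHom m G e x)).symm

/-- The kernel functor value `K_e V`, the kernel of the natural map `V ⟶ Σ_e V`;
the `i`-th kernel functor `K_i` of the paper is recovered with `e = Pi.single i 1`. -/
def Kobj (e : Fin m → ℕ) (V : ModG m G k) : ModG m G k :=
  kernel (incMapV m G k e V)

/-- The derivative functor `D_e`, sending `V` to the cokernel of `V ⟶ Σ_e V`;
the `i`-th derivative functor `D_i` of the paper is recovered with `e = Pi.single i 1`. -/
def Dfun (e : Fin m → ℕ) : ModG m G k ⥤ ModG m G k where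
  obj V := cokernel (incMapV m G k e V)
  map {V W} φ := cokernel.map _ _ φ ((sigmaF m G k e).map φ)
    ((incNat m G k e).naturality φ).symm
  map_id X := coequalizer.hom_ext (by simp [cokernel.map])
  map_comp f g := coequalizer.hom_ext (by simp [cokernel.map])

instance sigmaF_additive (e : Fin m → ℕ) : (sigmaF m G k e).Additive :=
  ⟨by intros; apply NatTrans.ext; funext x; rfl⟩

instance Dfun_pzm (e : Fin m → ℕ) : (Dfun m G k e).PreservesZeroMorphisms where
  map_zero X Y := coequalizer.hom_ext (by simp [Dfun, cokernel.map]; exact comp_zero.symm)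

/-- The functor `D_S = ⊕_{i ∈ S} D_i`. -/
def DSfun (S : Finset (Fin m)) : ModG m G k ⥤ ModG m G k where
  obj V := ⨁ (fun i : {i // i ∈ S} => (Dfun m G k (Pi.single i.1 1)).obj V)
  map φ := biproduct.map (fun i => (Dfun m G k (Pi.single i.1 1)).map φ)
  map_id X := by ext i; simp
  map_comp f g := by ext i; simp

instance DSfun_pzm (S : Finset (Fin m)) : (DSfun m G k S).PreservesZeroMorphisms where
  map_zero X Y := by
    apply biproduct.hom_ext
    intro i
    simp [DSfun]
    exact zero_comp.symm

/-- The `S`-degree of a morphism `α : x ⟶ y` in `C^m_G`: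
`deg_S(α) = ∑_{i ∈ S} (y_i − x_i)`. -/
def degS (S : Finset (Fin m)) {x y : FImG m G} (_ : x ⟶ y) : ℤ :=
  ∑ i ∈ S, ((y.1.comp i : ℤ) - (x.1.comp i : ℤ))

/-- An element `v ∈ V(x)` is `S`-torsion if some morphism `α` with `deg_S(α) > 0` and
`deg_{[m]∖S}(α) = 0` kills it. -/
def IsTorsionElt (S : Finset (Fin m)) (V : ModG m G k) {x : FImG m G} (v : V.obj x) : Prop :=
  ∃ (y : FImG m G) (α : x ⟶ y),
    0 < degS m G S α ∧ degS m G Sᶜ α = 0 ∧ V.map α v = 0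

/-- A `C^m_G`-module is `S`-torsion free if it has no nonzero `S`-torsion element. -/
def STorsionFree (S : Finset (Fin m)) (V : ModG m G k) : Prop :=
  ∀ (x : FImG m G) (v : V.obj x), IsTorsionElt m G k S V v → v = 0

/-- The free (projective) module `M(x)`, the `k`-linearization of the representable
functor at the object `x`. -/
def RepM (x : FImG m G) : ModG m G k :=
  coyoneda.obj (Opposite.op x) ⋙ ModuleCat.free k

/-- A `C^m_G`-module is finitely generated if it is a quotient of a finite direct sum
of linearizations of representable functors. -/
def FinitelyGenerated (V : ModG m G k) : Prop :=
  ∃ (r : ℕ) (xs : Fin r → FImG m G) (p : (⨁ fun a => RepM m G k (xs a)) ⟶ V), Epi p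

/-- The subcategory `R_s = Aut(s) × C^{[m]∖S}_G` of `C^m_G`, realized as the full
subcategory of objects whose `S`-coordinates agree with `s`. -/
def Rcat (S : Finset (Fin m)) (s : Fin m → ℕ) :=
  CategoryTheory.ObjectProperty.FullSubcategory (fun x : FImG m G => ∀ j ∈ S, x.1.comp j = s j)

instance (S : Finset (Fin m)) (s : Fin m → ℕ) : Category (Rcat m G S s) :=
  CategoryTheory.ObjectProperty.FullSubcategory.category _

/-- The inclusion `R_s ↪ C^m_G`. -/
def inclR (S : Finset (Fin m)) (s : Fin m → ℕ) : Rcat m G S s ⥤ FImG m G :=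
  ObjectProperty.ι _

set_option synthInstance.maxHeartbeats 1000000 in
instance hasLKE (S : Finset (Fin m)) (s : Fin m → ℕ) (F : Rcat m G S s ⥤ ModuleCat.{0} k) :
    (inclR m G S s).HasLeftKanExtension F := inferInstance

/-- The induction functor `F_s = M̄(s) ⊗_{R_s} −`, realized as the left Kan extension
along the inclusion `R_s ↪ C^m_G`. -/
def indF (S : Finset (Fin m)) (s : Fin m → ℕ) :
    (Rcat m G S s ⥤ ModuleCat.{0} k) ⥤ ModG m G k :=
  (inclR m G S s).lan

/-- A module is `S`-induced if it is isomorphic to `F_s(W)` for some object `s` of `C^S`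
and some `R_s`-module `W`. -/
def IsInduced (S : Finset (Fin m)) (V : ModG m G k) : Prop :=
  ∃ (s : Fin m → ℕ) (W : Rcat m G S s ⥤ ModuleCat.{0} k),
    Nonempty (V ≅ (indF m G k S s).obj W)

/-- A module is `S`-semi-induced if it has a finite filtration whose successive quotients
are `S`-induced; equivalently (inductively): a zero module is `S`-semi-induced, and any
extension of an `S`-induced module by an `S`-semi-induced module is `S`-semi-induced. -/
inductive IsSemiInduced (S : Finset (Fin m)) : ModG m G k → Prop
  | of_isZero (V : ModG m G k) : Limits.IsZero V → IsSemiInduced S V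
  | step (sc : ShortComplex (ModG m G k)) : sc.ShortExact → IsSemiInduced S sc.X₁ →
      IsInduced m G k S sc.X₃ → IsSemiInduced S sc.X₂

/-- `V` is generated by its slice `V[[s]]` iff the counit `F_s(V[[s]]) ⟶ V` of the
Kan-extension adjunction (induction ⊣ restriction) is an epimorphism. -/
def GeneratedBySlice (S : Finset (Fin m)) (s : Fin m → ℕ) (V : ModG m G k) : Prop :=
  Epi ((((inclR m G S s).lanAdjunction (ModuleCat.{0} k)).counit).app V)

lemma comp_le_of_hom {x y : FImG m G} (f : x ⟶ y) (i : Fin m) :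
    x.1.comp i ≤ y.1.comp i := by
  simpa using Fintype.card_le_of_embedding (f.1 i)

lemma degS_nonneg (S : Finset (Fin m)) {x y : FImG m G} (f : x ⟶ y) :
    0 ≤ degS m G S f := by
  refine Finset.sum_nonneg fun i _ => ?_
  have := comp_le_of_hom m G f i
  omega

lemma degS_comp (S : Finset (Fin m)) {x y z : FImG m G} (f : x ⟶ y) (g : y ⟶ z) :
    degS m G S (f ≫ g) = degS m G S f + degS m G S g := by
  rw [degS, degS, degS, ← Finset.sum_add_distrib]
  exact Finset.sum_congr rfl fun i _ => by ring

/-- The value at `x` of the submodule `𝔍_S V ⊆ V`, where `𝔍_S` is the two-sided ideal of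
the category algebra spanned by all morphisms of positive `S`-degree. -/
def Jsub (S : Finset (Fin m)) (V : ModG m G k) (x : FImG m G) : Submodule k (V.obj x) :=
  ⨆ (y : FImG m G) (α : y ⟶ x) (_ : 0 < degS m G S α), LinearMap.range (V.map α).hom

lemma Jsub_le_comap (S : Finset (Fin m)) (V : ModG m G k) {x x' : FImG m G} (f : x ⟶ x') :
    Jsub m G k S V x ≤ (Jsub m G k S V x').comap (V.map f).hom := by
  refine iSup_le fun y => iSup_le fun α => iSup_le fun hα => ?_
  rintro v ⟨w, rfl⟩
  have h1 : (V.map f).hom ((V.map α).hom w) = (V.map (α ≫ f)).hom w := by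
    rw [V.map_comp]; rfl
  have h2 : 0 < degS m G S (α ≫ f) := by
    rw [degS_comp]
    have := degS_nonneg m G S f
    omega
  refine Submodule.mem_comap.2 ?_
  rw [h1]
  exact Submodule.mem_iSup_of_mem y (Submodule.mem_iSup_of_mem (α ≫ f)
    (Submodule.mem_iSup_of_mem h2 ⟨w, rfl⟩))

lemma Jsub_le_comap_app (S : Finset (Fin m)) {V W : ModG m G k} (φ : V ⟶ W) (x : FImG m G) :
    Jsub m G k S V x ≤ (Jsub m G k S W x).comap (φ.app x).hom := by
  refine iSup_le fun y => iSup_le fun α => iSup_le fun hα => ?_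
  rintro v ⟨w, rfl⟩
  have h1 : (φ.app x).hom ((V.map α).hom w) = (W.map α).hom ((φ.app y).hom w) := by
    have := φ.naturality α
    exact congrFun (congrArg (fun (t : V.obj y ⟶ W.obj x) => ⇑t.hom) this) w
  refine Submodule.mem_comap.2 ?_
  rw [h1]
  exact Submodule.mem_iSup_of_mem y (Submodule.mem_iSup_of_mem α
    (Submodule.mem_iSup_of_mem hα ⟨_, rfl⟩))

/-- The value of `H_0^S(V) = V/𝔍_S V` as a `C^m_G`-module. -/
def H0Sobj (S : Finset (Fin m)) (V : ModG m G k) : ModG m G k where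
  obj x := ModuleCat.of k (V.obj x ⧸ Jsub m G k S V x)
  map {x x'} f := ModuleCat.ofHom (Submodule.mapQ _ _ (V.map f).hom (Jsub_le_comap m G k S V f))
  map_id x := by
    apply ModuleCat.hom_ext
    apply Submodule.linearMap_qext
    ext v
    show Submodule.Quotient.mk ((V.map (𝟙 x)).hom v) = Submodule.Quotient.mk v
    rw [V.map_id]
    rfl
  map_comp {x y z} f g := by
    apply ModuleCat.hom_ext
    apply Submodule.linearMap_qext
    ext v
    show Submodule.Quotient.mk ((V.map (f ≫ g)).hom v)
      = Submodule.Quotient.mk ((V.map g).hom ((V.map f).hom v))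
    rw [V.map_comp]
    rfl

/-- The functor `H_0^S`, sending `V` to `V/𝔍_S V`. -/
def H0S (S : Finset (Fin m)) : ModG m G k ⥤ ModG m G k where
  obj V := H0Sobj m G k S V
  map {V W} φ :=
    { app := fun x => ModuleCat.ofHom (Submodule.mapQ _ _ (φ.app x).hom (Jsub_le_comap_app m G k S φ x))
      naturality := fun x y f => by
        apply ModuleCat.hom_ext
        apply Submodule.linearMap_qext
        ext v
        have := φ.naturality f
        have h1 : (φ.app y).hom ((V.map f).hom v) = (W.map f).hom ((φ.app x).hom v) :=
          congrFun (congrArg (fun (t : V.obj x ⟶ W.obj y) => ⇑t.hom) this) v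
        show Submodule.Quotient.mk ((φ.app y).hom ((V.map f).hom v))
          = Submodule.Quotient.mk ((W.map f).hom ((φ.app x).hom v))
        rw [h1] }
  map_id V := by
    apply NatTrans.ext; funext x
    apply ModuleCat.hom_ext
    apply Submodule.linearMap_qext
    ext v
    rfl
  map_comp {U V W} φ ψ := by
    apply NatTrans.ext; funext x
    apply ModuleCat.hom_ext
    apply Submodule.linearMap_qext
    ext v
    rfl

instance (S : Finset (Fin m)) : (H0S m G k S).Additive where
  map_add := by
    intro V W φ ψ
    apply NatTrans.ext; funext x
    apply ModuleCat.hom_ext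
    apply Submodule.linearMap_qext
    ext v
    rfl

/-- The free module `M(x) ⊗ W` on a vector space `W` placed at the object `x`. -/
def freeAt (x : FImG m G) (W : ModuleCat.{0} k) : ModG m G k where
  obj y := ModuleCat.of k ((x ⟶ y) →₀ W)
  map {y z} g := ModuleCat.ofHom (Finsupp.lmapDomain W k (fun α => α ≫ g))
  map_id y := by
    have h : (fun α : x ⟶ y => α ≫ 𝟙 y) = id := funext fun α => Category.comp_id α
    apply ModuleCat.hom_ext
    show Finsupp.lmapDomain W k (fun α : x ⟶ y => α ≫ 𝟙 y) = _
    rw [h, Finsupp.lmapDomain_id]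
    rfl
  map_comp {y z w} g h := by
    have hc : (fun α : x ⟶ y => α ≫ (g ≫ h)) = (fun β : x ⟶ z => β ≫ h) ∘ (fun α : x ⟶ y => α ≫ g) :=
      funext fun α => (Category.assoc α g h).symm
    apply ModuleCat.hom_ext
    show Finsupp.lmapDomain W k (fun α : x ⟶ y => α ≫ (g ≫ h)) = _
    rw [hc, Finsupp.lmapDomain_comp]
    rfl

/-- The universal property map out of `freeAt x W`. -/
def fromFree {x : FImG m G} {W : ModuleCat.{0} k} {N : ModG m G k} (φ : W →ₗ[k] N.obj x) :
    freeAt m G k x W ⟶ N where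
  app y := ModuleCat.ofHom (Finsupp.lsum k (fun α : x ⟶ y => (N.map α).hom.comp φ))
  naturality {y z} g := by
    apply ModuleCat.hom_ext
    apply Finsupp.lhom_ext
    intro α w
    show Finsupp.lsum k (fun β : x ⟶ z => (N.map β).hom.comp φ)
        (Finsupp.mapDomain (fun β => β ≫ g) (Finsupp.single α w))
      = (N.map g).hom ((Finsupp.lsum k (fun β : x ⟶ y => (N.map β).hom.comp φ)) (Finsupp.single α w))
    rw [Finsupp.mapDomain_single]
    simp only [Finsupp.lsum_single, LinearMap.comp_apply]
    rw [N.map_comp]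
    rfl

instance freeAt_projective (x : FImG m G) (W : ModuleCat.{0} k) :
    Projective (freeAt m G k x W) where
  factors {E X} f e he := by
    haveI : Module.Free k W := Module.Free.of_divisionRing k W
    haveI : Module.Projective k W := Module.Projective.of_free
    have hsurj : Function.Surjective (e.app x).hom :=
      (ModuleCat.epi_iff_surjective (e.app x)).1 inferInstance
    obtain ⟨φ, hφ⟩ := Module.projective_lifting_property (e.app x).hom
      ((f.app x).hom.comp (Finsupp.lsingle (𝟙 x))) hsurj
    refine ⟨fromFree m G k φ, ?_⟩
    apply NatTrans.ext; funext y
    apply ModuleCat.hom_ext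
    apply Finsupp.lhom_ext
    intro α w
    show (e.app y).hom ((Finsupp.lsum k (fun β : x ⟶ y => (E.map β).hom.comp φ)) (Finsupp.single α w))
      = (f.app y).hom (Finsupp.single α w)
    rw [Finsupp.lsum_single, LinearMap.comp_apply]
    have h1 : (e.app y).hom ((E.map α).hom (φ w)) = (X.map α).hom ((e.app x).hom (φ w)) :=
      congrFun (congrArg (fun (t : E.obj x ⟶ X.obj y) => ⇑t.hom) (e.naturality α)) (φ w)
    have h2 : (e.app x).hom (φ w) = (f.app x).hom (Finsupp.single (𝟙 x) w) :=
      congrFun (congrArg (fun (t : W →ₗ[k] X.obj x) => ⇑t) hφ) w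
    have h3 : (X.map α).hom ((f.app x).hom (Finsupp.single (𝟙 x) w))
        = (f.app y).hom (((freeAt m G k x W).map α).hom (Finsupp.single (𝟙 x) w)) :=
      (congrFun (congrArg (fun (t : (freeAt m G k x W).obj x ⟶ X.obj y) => ⇑t.hom)
        (f.naturality α)) (Finsupp.single (𝟙 x) w)).symm
    have h4 : ((freeAt m G k x W).map α).hom (Finsupp.single (𝟙 x) w) = Finsupp.single α w := by
      show Finsupp.mapDomain (fun β : x ⟶ x => β ≫ α) (Finsupp.single (𝟙 x) w)
        = Finsupp.single α w
      rw [Finsupp.mapDomain_single, Category.id_comp]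
    rw [h1, h2, h3, h4]

lemma projective_sigma {J : Type} (f : J → ModG m G k) [HasCoproduct f]
    (h : ∀ j, Projective (f j)) : Projective (∐ f) where
  factors {E X} g e he := by
    refine ⟨Sigma.desc fun j => (h j).factors (Sigma.ι f j ≫ g) e |>.choose, ?_⟩
    apply Sigma.hom_ext
    intro j
    rw [← Category.assoc, colimit.ι_desc]
    exact ((h j).factors (Sigma.ι f j ≫ g) e).choose_spec

/-- The canonical projective cover `⊕_x M(x) ⊗ V(x) ⟶ V`. -/
def coverHom (V : ModG m G k) : (∐ fun x : FImG m G => freeAt m G k x (V.obj x)) ⟶ V :=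
  Sigma.desc fun x => fromFree m G k LinearMap.id

instance coverHom_epi (V : ModG m G k) : Epi (coverHom m G k V) := by
  haveI : ∀ y : FImG m G, Epi ((coverHom m G k V).app y) := by
    intro y
    rw [ModuleCat.epi_iff_surjective]
    intro v
    refine ⟨((Sigma.ι (fun x : FImG m G => freeAt m G k x (V.obj x)) y).app y).hom
      (Finsupp.single (𝟙 y) v), ?_⟩
    have h1 : Sigma.ι (fun x : FImG m G => freeAt m G k x (V.obj x)) y ≫ coverHom m G k V
        = fromFree m G k LinearMap.id := colimit.ι_desc _ _
    have h2 := congrFun (congrArg (fun (t : freeAt m G k y (V.obj y) ⟶ V) => ⇑(t.app y).hom) h1)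
      (Finsupp.single (𝟙 y) v)
    refine Eq.trans ?_ (h2.trans ?_)
    · rfl
    · show (Finsupp.lsum k (fun α : y ⟶ y => (V.map α).hom.comp LinearMap.id)) (Finsupp.single (𝟙 y) v) = v
      rw [Finsupp.lsum_single, LinearMap.comp_apply, LinearMap.id_apply, V.map_id]
      rfl
  exact NatTrans.epi_of_epi_app _

instance : EnoughProjectives (ModG m G k) where
  presentation V := ⟨{
    p := ∐ fun x : FImG m G => freeAt m G k x (V.obj x)
    projective := projective_sigma m G k _ fun x => freeAt_projective m G k x (V.obj x)
    f := coverHom m G k V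
    epi := coverHom_epi m G k V }⟩

/-- The `i`-th `S`-homology functor `H_i^S`, the `i`-th left derived functor of `H_0^S`. -/
def HiS (S : Finset (Fin m)) (i : ℕ) : ModG m G k ⥤ ModG m G k :=
  (H0S m G k S).leftDerived i

/-- The slice `W[[s]]` of a module on the object `s` of `C^S` is nonzero. -/
def SliceNonzero (S : Finset (Fin m)) (W : ModG m G k) (s : Fin m → ℕ) : Prop :=
  ∃ x : FImG m G, (∀ j ∈ S, x.1.comp j = s j) ∧ Nontrivial (W.obj x)

/-- The `i`-th `S`-homological degree `t_i^S(V)`, the supremum of the `S`-degrees of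
objects `s` of `C^S` with `H_i^S(V)[[s]] ≠ 0` (with `⊥` playing the role of `−1` when
there is no such object). -/
def tS (S : Finset (Fin m)) (i : ℕ) (V : ModG m G k) : WithBot ℕ∞ :=
  sSup ((fun s : Fin m → ℕ => (((∑ j ∈ S, s j : ℕ) : ℕ∞) : WithBot ℕ∞)) ''
    {s | SliceNonzero m G k S ((HiS m G k S i).obj V) s})

/-! ### Plain `C^m`-modules (no group factor) -/

/-- The category of `C^m`-modules over `k`. -/
abbrev ModM := FImObj m ⥤ ModuleCat.{0} k

instance : HasFiniteBiproducts (ModM m k) := Abelian.hasFiniteBiproducts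

/-- The category of `C`-modules (`FI`-modules) over `k`. -/
abbrev ModC := FIObj ⥤ ModuleCat.{0} k

instance : HasFiniteBiproducts (ModC k) := Abelian.hasFiniteBiproducts

/-- The shift functor `Σ_e` on `C^m`-modules. -/
def sigmaFM (e : Fin m → ℕ) : ModM m k ⥤ ModM m k :=
  (Functor.whiskeringLeft _ _ _).obj (addF m e)

/-- The canonical inclusion `x ⟶ ι_e(x)` in `C^m`. -/
def incHomM (e : Fin m → ℕ) (x : FImObj m) : x ⟶ (addF m e).obj x :=
  fun j => ⟨Fin.castAdd (e j), fun u v huv => Fin.castAdd_injective _ _ huv⟩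

lemma incHomM_naturality (e : Fin m → ℕ) {x y : FImObj m} (f : x ⟶ y) :
    incHomM m e x ≫ (addF m e).map f = f ≫ incHomM m e y := by
  funext j
  ext t
  exact congrArg Fin.val (shiftEmb_castAdd (e j) (f j) t)

/-- The natural inclusion `V ⟶ Σ_e V` for a `C^m`-module `V`. -/
def incMapVM (e : Fin m → ℕ) (V : ModM m k) : V ⟶ (sigmaFM m k e).obj V where
  app x := V.map (incHomM m e x)
  naturality x y f := by
    dsimp [sigmaFM]
    rw [← V.map_comp, ← V.map_comp, incHomM_naturality]

/-- The derivative `D_e V`, the cokernel of `V ⟶ Σ_e V`, for a `C^m`-module `V`. -/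
def DobjM (e : Fin m → ℕ) (V : ModM m k) : ModM m k :=
  cokernel (incMapVM m k e V)

/-- The free `C^m`-module `M(x)` at the object `x`. -/
def RepMM (x : FImObj m) : ModM m k :=
  coyoneda.obj (Opposite.op x) ⋙ ModuleCat.free k

/-- Finite generation for `C^m`-modules. -/
def FinitelyGeneratedM (V : ModM m k) : Prop :=
  ∃ (r : ℕ) (xs : Fin r → FImObj m) (p : (⨁ fun a => RepMM m k (xs a)) ⟶ V), Epi p

/-- The free `C`-module `M(x)` at an object `x` of `FI`. -/
def RepMC (x : FIObj) : ModC k :=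
  coyoneda.obj (Opposite.op x) ⋙ ModuleCat.free k

/-- Finite generation for `C`-modules. -/
def FinitelyGeneratedC (V : ModC k) : Prop :=
  ∃ (r : ℕ) (xs : Fin r → FIObj) (p : (⨁ fun a => RepMC k (xs a)) ⟶ V), Epi p

/-- The external tensor product `I₁ ⊠ ⋯ ⊠ I_m` of `C`-modules, a `C^m`-module. -/
def extProd (I : Fin m → ModC k) : ModM m k where
  obj x := ModuleCat.of k (⨂[k] j, (I j).obj ⟨x.comp j⟩)
  map {x y} f := ModuleCat.ofHom (PiTensorProduct.map (fun j => ((I j).map (f j)).hom))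
  map_id x := by
    have h : (fun j => ((I j).map ((𝟙 x : x ⟶ x) j)).hom) = fun j => LinearMap.id := by
      funext j
      show ((I j).map (𝟙 (⟨x.comp j⟩ : FIObj))).hom = LinearMap.id
      rw [(I j).map_id]
      rfl
    apply ModuleCat.hom_ext
    show PiTensorProduct.map (fun j => ((I j).map ((𝟙 x : x ⟶ x) j)).hom) = _
    rw [h, PiTensorProduct.map_id]
    rfl
  map_comp {x y z} f g := by
    have h : (fun j => ((I j).map ((f ≫ g) j)).hom)
        = fun j => ((I j).map (g j)).hom.comp ((I j).map (f j)).hom := by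
      funext j
      show ((I j).map ((f j : (⟨x.comp j⟩ : FIObj) ⟶ ⟨y.comp j⟩) ≫ (g j))).hom = _
      rw [(I j).map_comp]
      rfl
    apply ModuleCat.hom_ext
    show PiTensorProduct.map (fun j => ((I j).map ((f ≫ g) j)).hom) = _
    rw [h, PiTensorProduct.map_comp]
    rfl

/-- The `C^m_G`-module `V ⊠ kG`, where `kG` carries the (left regular) `G`-action. -/
def tensorG (V : ModM m k) : ModG m G k where
  obj x := ModuleCat.of k (TensorProduct k (V.obj x.1) (G →₀ k))
  map {x y} f := ModuleCat.ofHom (TensorProduct.map (V.map f.1).hom (Finsupp.lmapDomain k k (f.2 • ·)))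
  map_id x := by
    have h1 : (V.map (𝟙 x.1)).hom = LinearMap.id := by rw [V.map_id]; rfl
    have h2 : Finsupp.lmapDomain k k (fun h : G => (1 : G) • h) = LinearMap.id := by
      ext a b; simp
    apply ModuleCat.hom_ext
    show TensorProduct.map (V.map (𝟙 x.1)).hom (Finsupp.lmapDomain k k (fun h : G => (1 : G) • h)) = _
    rw [h1, h2, TensorProduct.map_id]
    rfl
  map_comp {x y z} f g := by
    have h1 : (V.map ((f ≫ g).1)).hom = (V.map g.1).hom.comp (V.map f.1).hom := by
      rw [show (f ≫ g).1 = f.1 ≫ g.1 from rfl, V.map_comp]; rfl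
    have h2 : Finsupp.lmapDomain k k (fun h : G => ((f ≫ g).2 : G) • h)
        = (Finsupp.lmapDomain k k (fun h : G => (g.2 : G) • h)).comp
          (Finsupp.lmapDomain k k (fun h : G => (f.2 : G) • h)) := by
      show Finsupp.lmapDomain k k (fun h : G => ((g.2 : G) * f.2) • h) = _
      ext a b; simp [mul_assoc]
    apply ModuleCat.hom_ext
    show TensorProduct.map (V.map ((f ≫ g).1)).hom (Finsupp.lmapDomain k k (fun h : G => ((f ≫ g).2 : G) • h)) = _
    rw [h1, h2, TensorProduct.map_comp]
    rfl

end

/-!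
`𝔍_S V` at an object is spanned by the images of the morphisms of positive `S`-degree into it.
A morphism into `ι_i x` either misses the point added by `ι_i`, and then factors through the
inclusion `x ⟶ ι_i x`, or hits it, and then, after a permutation of its source, it is `ι_i` of
a morphism into `x` of the same `S`-degree. Hence
`𝔍_S V (ι_i x) = im (V x → V (ι_i x)) + 𝔍_S (Σ_i V) x`, so `H_0^S(D_i V)` vanishes at `x`
exactly when `H_0^S(V)` vanishes at `ι_i x`: the `S`-degrees where `H_0^S(D_S V)` is nonzero
are those of `H_0^S(V)` lowered by one. Since `H_0^S` is right exact, it agrees with its zeroth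
left derived functor, and the degree count gives the theorem.
-/

lemma shiftEmb_natAdd (K : ℕ) {a b : ℕ} (f : Fin a ↪ Fin b) (w : Fin K) :
    shiftEmb K f (Fin.natAdd a w) = Fin.natAdd b w := by
  simp [shiftEmb]

lemma exists_eq_shiftEmb {K a b : ℕ} (f : Fin (a + K) ↪ Fin (b + K))
    (hf : ∀ w, f (Fin.natAdd a w) = Fin.natAdd b w) :
    ∃ g : Fin a ↪ Fin b, f = shiftEmb K g := by
  have hlt : ∀ u : Fin a, (f (Fin.castAdd K u) : ℕ) < b := by
    intro u
    by_contra! hle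
    have hw : f (Fin.castAdd K u) =
        f (Fin.natAdd a ⟨_, Nat.sub_lt_left_of_lt_add hle (f _).2⟩) := by
      rw [hf]; ext; simp; omega
    have := congrArg Fin.val (f.injective hw)
    simp at this; omega
  refine ⟨⟨fun u => (f (Fin.castAdd K u)).castLT (hlt u), fun u v h => ?_⟩, ?_⟩
  · have h := Fin.val_eq_of_eq h
    exact Fin.castAdd_injective _ _ (f.injective (Fin.ext h))
  · ext v
    induction v using Fin.addCases with
    | left u => rw [shiftEmb_castAdd]; rfl
    | right w => rw [hf, shiftEmb_natAdd]

/-- `τ` moves the preimages of the new points `Fin.natAdd b w` to the new points `Fin.natAdd a w`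
of the source; it exists because `Equiv.Perm` acts `K`-transitively. -/
lemma exists_eq_perm_trans_shiftEmb {K a b : ℕ} (f : Fin (a + K) ↪ Fin (b + K))
    (hf : ∀ w, Fin.natAdd b w ∈ Set.range f) :
    ∃ (τ : Equiv.Perm (Fin (a + K))) (g : Fin a ↪ Fin b),
      f = τ.toEmbedding.trans (shiftEmb K g) := by
  choose q hq using hf
  have hq_inj : Function.Injective q := fun w w' h => by
    simpa using (hq w).symm.trans ((congrArg f h).trans (hq w'))
  obtain ⟨τ, hτ⟩ := MulAction.isMultiplyPretransitive_iff.1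
    (Equiv.Perm.isMultiplyPretransitive _ K) (Fin.natAddEmb a) ⟨q, hq_inj⟩
  obtain ⟨g, hg⟩ := exists_eq_shiftEmb (τ.toEmbedding.trans f) fun w => by
    simpa [← hq w] using congrArg f (DFunLike.congr_fun hτ w)
  refine ⟨τ⁻¹, g, ?_⟩
  rw [← hg]
  ext v
  simp

section Morphisms

variable {m : ℕ} {G : Type} [Group G]

lemma degS_eq_zero_of_endo (S : Finset (Fin m)) {x : FImG m G} (f : x ⟶ x) :
    degS m G S f = 0 := by
  simp [degS]

lemma degS_eq_sub (S : Finset (Fin m)) {x y : FImG m G} (f : x ⟶ y) :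
    degS m G S f = ((∑ j ∈ S, y.1.comp j : ℕ) : ℤ) - ((∑ j ∈ S, x.1.comp j : ℕ) : ℤ) := by
  simp [degS]

lemma sum_comp_addFG_obj (S : Finset (Fin m)) (e : Fin m → ℕ) (x : FImG m G) :
    ∑ j ∈ S, ((addFG m G e).obj x).1.comp j = ∑ j ∈ S, x.1.comp j + ∑ j ∈ S, e j :=
  Finset.sum_add_distrib

lemma degS_incHom (S : Finset (Fin m)) (e : Fin m → ℕ) (x : FImG m G) :
    degS m G S (incHom m G e x) = ((∑ j ∈ S, e j : ℕ) : ℤ) := by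
  rw [degS_eq_sub, sum_comp_addFG_obj]
  push_cast; ring

lemma degS_addFG_map (S : Finset (Fin m)) (e : Fin m → ℕ) {z x : FImG m G} (α : z ⟶ x) :
    degS m G S ((addFG m G e).map α) = degS m G S α := by
  rw [degS_eq_sub, degS_eq_sub, sum_comp_addFG_obj, sum_comp_addFG_obj]
  push_cast; ring

lemma exists_addFG_obj_eq (e : Fin m → ℕ) (z : FImG m G) (h : ∀ j, e j ≤ z.1.comp j) :
    ∃ z', (addFG m G e).obj z' = z :=
  ⟨(⟨fun j => z.1.comp j - e j⟩, z.2),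
    Prod.ext (FImObj.ext (funext fun j => Nat.sub_add_cancel (h j))) rfl⟩

lemma exists_eq_comp_incHom (e : Fin m → ℕ) {z x : FImG m G} (α : z ⟶ (addFG m G e).obj x)
    (hα : ∀ j u, (α.1 j u : ℕ) < x.1.comp j) : ∃ γ : z ⟶ x, α = γ ≫ incHom m G e x := by
  refine ⟨(fun j => ⟨fun u => (α.1 j u).castLT (hα j u), fun u v h => ?_⟩, α.2), ?_⟩
  · have h := Fin.val_eq_of_eq h
    exact (α.1 j).injective (Fin.ext h)
  · refine Prod.ext (funext fun j => ?_) (by simp [incHom, SingleObj.comp_as_mul])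
    ext u
    rfl

lemma exists_eq_comp_addFG_map (S : Finset (Fin m)) (e : Fin m → ℕ) {z x : FImG m G}
    (α : z ⟶ (addFG m G e).obj x)
    (hα : ∀ j (w : Fin (e j)), Fin.natAdd (x.1.comp j) w ∈ Set.range (α.1 j)) :
    ∃ (z' : FImG m G) (δ : z ⟶ (addFG m G e).obj z') (γ : z' ⟶ x),
      α = δ ≫ (addFG m G e).map γ ∧ degS m G S γ = degS m G S α := by
  have he : ∀ j, e j ≤ z.1.comp j := fun j => by
    choose q hq using hα j
    simpa using Fintype.card_le_of_injective q fun w w' h =>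
      (Fin.natAdd_inj _).1 ((hq w).symm.trans ((congrArg (α.1 j) h).trans (hq w')))
  obtain ⟨z', rfl⟩ := exists_addFG_obj_eq e z he
  choose τ g hτg using fun j => exists_eq_perm_trans_shiftEmb (α.1 j) (hα j)
  let δ : (addFG m G e).obj z' ⟶ (addFG m G e).obj z' := (fun j => (τ j).toEmbedding, (1 : G))
  let γ : z' ⟶ x := (g, α.2)
  have hfac : α = δ ≫ (addFG m G e).map γ :=
    Prod.ext (funext hτg) (by simp [δ, γ, addFG, SingleObj.comp_as_mul])
  refine ⟨z', δ, γ, hfac, ?_⟩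
  rw [hfac, degS_comp, degS_eq_zero_of_endo, degS_addFG_map, zero_add]

/-- `ι_i` adds a single new point, so a morphism into `ι_i x` hits either all new points or none. -/
lemma natAdd_mem_range_or_lt (i : Fin m) {z x : FImG m G}
    (α : z ⟶ (addFG m G (Pi.single i 1)).obj x) :
    (∀ j (w : Fin ((Pi.single i 1 : Fin m → ℕ) j)),
        Fin.natAdd (x.1.comp j) w ∈ Set.range (α.1 j)) ∨
      ∀ j u, (α.1 j u : ℕ) < x.1.comp j := by
  by_cases h : ∃ u, (α.1 i u : ℕ) = x.1.comp i
  · left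
    obtain ⟨u, hu⟩ := h
    intro j w
    have hw := w.2
    rcases eq_or_ne j i with rfl | hj
    · exact ⟨u, Fin.ext (by simp at hw ⊢; omega)⟩
    · simp [Pi.single_eq_of_ne hj] at hw
  · right
    simp only [not_exists] at h
    intro j u
    have hu := (α.1 j u).2
    change _ < x.1.comp j + (Pi.single i 1 : Fin m → ℕ) j at hu
    rcases eq_or_ne j i with rfl | hj
    · have := h u
      simp at hu
      omega
    · simpa [Pi.single_eq_of_ne hj] using hu

end Morphisms

lemma Submodule.ker_mapQ_le_range_mapQ {R A B C : Type*} [Ring R] [AddCommGroup A] [Module R A]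
    [AddCommGroup B] [Module R B] [AddCommGroup C] [Module R C]
    {f : A →ₗ[R] B} {g : B →ₗ[R] C} {pA : Submodule R A} {pB : Submodule R B}
    {pC : Submodule R C} (hf : pA ≤ pB.comap f) (hg : pB ≤ pC.comap g)
    (hfg : LinearMap.ker g ≤ LinearMap.range f) (hC : pC ≤ pB.map g) :
    LinearMap.ker (pB.mapQ pC g hg) ≤ LinearMap.range (pA.mapQ pB f hf) := by
  intro b hb
  induction b using Submodule.Quotient.induction_on with | H b =>
  obtain ⟨b₀, hb₀, hgb⟩ := hC ((Submodule.Quotient.mk_eq_zero _).1 hb)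
  obtain ⟨a, ha⟩ := hfg (show b - b₀ ∈ LinearMap.ker g by simp [hgb])
  refine ⟨Submodule.Quotient.mk a, ?_⟩
  simp only [Submodule.mapQ_apply, ha]
  exact (Submodule.Quotient.eq _).2 (by simpa using hb₀)

lemma CategoryTheory.ShortComplex.exact_iff_exact_evaluation {C D : Type*} [Category C]
    [Category D] [Abelian D] (S : ShortComplex (C ⥤ D)) :
    S.Exact ↔ ∀ X, (S.map ((evaluation C D).obj X)).Exact := by
  simp only [ShortComplex.exact_iff_isZero_homology, Functor.isZero_iff]
  exact forall_congr' fun X => (Iso.isZero_iff (S.mapHomologyIso ((evaluation C D).obj X))).symm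

section Homology

variable {m : ℕ} {G : Type} [Group G] {k : Type} [Field k]

lemma jsub_eq_map_of_epi (S : Finset (Fin m)) {V W : ModG m G k} (φ : V ⟶ W) [Epi φ]
    (x : FImG m G) : Jsub m G k S W x = (Jsub m G k S V x).map (φ.app x).hom := by
  refine le_antisymm (iSup_le fun y => iSup_le fun α => iSup_le fun hα => ?_)
    (Submodule.map_le_iff_le_comap.2 (Jsub_le_comap_app m G k S φ x))
  rintro _ ⟨w, rfl⟩
  obtain ⟨v, rfl⟩ := (ModuleCat.epi_iff_surjective (φ.app y)).1 inferInstance w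
  refine ⟨(V.map α).hom v, Submodule.mem_iSup_of_mem y (Submodule.mem_iSup_of_mem α
    (Submodule.mem_iSup_of_mem hα ⟨v, rfl⟩)), ?_⟩
  exact NatTrans.naturality_apply φ α v

instance preservesFiniteColimits_h0S (S : Finset (Fin m)) :
    PreservesFiniteColimits (H0S m G k S) := by
  refine ((Functor.preservesFiniteColimits_tfae (H0S m G k S)).out 1 3).1 ?_
  rintro T ⟨hT, _⟩
  refine ⟨?_, ?_⟩
  · rw [ShortComplex.exact_iff_exact_evaluation] at hT ⊢
    intro x
    rw [ShortComplex.moduleCat_exact_iff_ker_sub_range]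
    exact Submodule.ker_mapQ_le_range_mapQ (Jsub_le_comap_app m G k S T.f x)
      (Jsub_le_comap_app m G k S T.g x) (hT x).moduleCat_range_eq_ker.ge
      (jsub_eq_map_of_epi S T.g x).le
  · have hsurj : ∀ x, Function.Surjective (T.g.app x).hom := fun x =>
      (ModuleCat.epi_iff_surjective _).1 inferInstance
    have : ∀ x, Epi (((H0S m G k S).map T.g).app x) := fun x =>
      (ModuleCat.epi_iff_surjective _).2 fun c => by
        induction c using Submodule.Quotient.induction_on with | H c =>
        obtain ⟨b, rfl⟩ := hsurj x c
        exact ⟨Submodule.Quotient.mk b, rfl⟩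
    exact NatTrans.epi_of_epi_app _

lemma nontrivial_hiS_zero_obj_iff (S : Finset (Fin m)) (W : ModG m G k) (x : FImG m G) :
    Nontrivial (((HiS m G k S 0).obj W).obj x) ↔ Jsub m G k S W x ≠ ⊤ :=
  (((Functor.leftDerivedZeroIsoSelf (H0S m G k S)).app W).app x).toLinearEquiv.toEquiv
    |>.nontrivial_congr.trans Submodule.Quotient.nontrivial_iff

lemma jsub_addFG_single {S : Finset (Fin m)} {i : Fin m} (hi : i ∈ S) (V : ModG m G k)
    (x : FImG m G) :
    Jsub m G k S V ((addFG m G (Pi.single i 1)).obj x) =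
      LinearMap.range (V.map (incHom m G (Pi.single i 1) x)).hom ⊔
        Jsub m G k S ((sigmaF m G k (Pi.single i 1)).obj V) x := by
  apply le_antisymm
  · refine iSup_le fun z => iSup_le fun α => iSup_le fun hα => ?_
    rintro _ ⟨v, rfl⟩
    rcases natAdd_mem_range_or_lt i α with hnew | hold
    · obtain ⟨z', δ, γ, rfl, hγ⟩ := exists_eq_comp_addFG_map S _ α hnew
      have hmem : _ ∈ Jsub m G k S ((sigmaF m G k (Pi.single i 1)).obj V) x :=
        Submodule.mem_iSup_of_mem z' (Submodule.mem_iSup_of_mem γ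
          (Submodule.mem_iSup_of_mem (hγ ▸ hα) (LinearMap.mem_range_self _ ((V.map δ).hom v))))
      rw [V.map_comp]
      exact Submodule.mem_sup_right hmem
    · obtain ⟨γ, rfl⟩ := exists_eq_comp_incHom _ α hold
      exact Submodule.mem_sup_left ⟨(V.map γ).hom v, by rw [V.map_comp]; rfl⟩
  · refine sup_le (le_iSup_of_le x (le_iSup_of_le _ (le_iSup_of_le ?_ le_rfl))) ?_
    · simp [degS_incHom, Finset.sum_pi_single', hi]
    · refine iSup_le fun y => iSup_le fun α => iSup_le fun hα => ?_
      exact le_iSup_of_le _ (le_iSup_of_le ((addFG m G _).map α)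
        (le_iSup_of_le (by rwa [degS_addFG_map]) le_rfl))

lemma jsub_dfun_eq_top_iff {S : Finset (Fin m)} {i : Fin m} (hi : i ∈ S) (V : ModG m G k)
    (x : FImG m G) :
    Jsub m G k S ((Dfun m G k (Pi.single i 1)).obj V) x = ⊤ ↔
      Jsub m G k S V ((addFG m G (Pi.single i 1)).obj x) = ⊤ := by
  set ψ := incMapV m G k (Pi.single i 1) V
  have hker : LinearMap.ker ((cokernel.π ψ).app x).hom = LinearMap.range (ψ.app x).hom :=
    ((ShortComplex.exact_cokernel ψ).map ((evaluation _ _).obj x)).moduleCat_range_eq_ker.symm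
  change Jsub m G k S (cokernel ψ) x = ⊤ ↔ _
  rw [jsub_eq_map_of_epi S (cokernel.π ψ) x, LinearMap.map_eq_top_iff
    (LinearMap.range_eq_top.2 ((ModuleCat.epi_iff_surjective _).1 inferInstance)), hker,
    jsub_addFG_single hi, sup_comm]
  rfl

lemma jsub_biproduct_eq_top_iff {J : Type} [Fintype J] (S : Finset (Fin m))
    (f : J → ModG m G k) (x : FImG m G) :
    Jsub m G k S (⨁ f) x = ⊤ ↔ ∀ j, Jsub m G k S (f j) x = ⊤ := by
  refine ⟨fun h j => ?_, fun h => eq_top_iff.2 fun w _ => ?_⟩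
  · rw [jsub_eq_map_of_epi S (biproduct.π f j) x, h, Submodule.map_top, LinearMap.range_eq_top]
    exact (ModuleCat.epi_iff_surjective _).1 inferInstance
  · have hw := congrArg (fun φ : ⨁ f ⟶ ⨁ f => (φ.app x).hom w) (biproduct.total (f := f))
    simp only [NatTrans.app_sum, ModuleCat.hom_sum, LinearMap.sum_apply, NatTrans.comp_app,
      ModuleCat.hom_comp, LinearMap.comp_apply, NatTrans.id_app, ModuleCat.hom_id,
      LinearMap.id_apply] at hw
    rw [← hw]
    exact Submodule.sum_mem _ fun j _ =>
      Jsub_le_comap_app m G k S (biproduct.ι f j) x (h j ▸ Submodule.mem_top)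

lemma jsub_dSfun_eq_top_iff (S : Finset (Fin m)) (V : ModG m G k) (x : FImG m G) :
    Jsub m G k S ((DSfun m G k S).obj V) x = ⊤ ↔
      ∀ i ∈ S, Jsub m G k S V ((addFG m G (Pi.single i 1)).obj x) = ⊤ := by
  change Jsub m G k S (⨁ fun i : {i // i ∈ S} => (Dfun m G k (Pi.single i.1 1)).obj V) x = ⊤ ↔ _
  rw [jsub_biproduct_eq_top_iff, Subtype.forall]
  exact forall₂_congr fun i hi => jsub_dfun_eq_top_iff hi V x

end Homology

lemma WithBot.sSup_image_natCast (A : Set ℕ) (hA : A.Nonempty) :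
    sSup ((fun n : ℕ => ((n : ℕ∞) : WithBot ℕ∞)) '' A) =
      ((⨆ n ∈ A, (n : ℕ∞) : ℕ∞) : WithBot ℕ∞) := by
  rw [← sSup_image, WithBot.coe_sSup' (hA.image _) (OrderTop.bddAbove _), Set.image_image]

lemma ENat.biSup_natCast_eq_biSup_succ (A : Set ℕ) :
    ⨆ n ∈ A, (n : ℕ∞) = ⨆ n ∈ {n : ℕ | n + 1 ∈ A}, (n : ℕ∞) + 1 := by
  refine le_antisymm (iSup₂_le fun n hn => ?_)
    (iSup₂_le fun n hn => le_iSup₂_of_le (n + 1) hn (by simp))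
  rcases n with _ | n
  · simp
  · exact le_iSup₂_of_le n (by simpa using hn) (by simp)

lemma WithBot.sSup_image_natCast_eq_or (A : Set ℕ) (hA : A.Nonempty) :
    sSup ((fun n : ℕ => ((n : ℕ∞) : WithBot ℕ∞)) '' A) =
        sSup ((fun n : ℕ => ((n : ℕ∞) : WithBot ℕ∞)) '' {n | n + 1 ∈ A}) + 1 ∨
      sSup ((fun n : ℕ => ((n : ℕ∞) : WithBot ℕ∞)) '' {n | n + 1 ∈ A}) = ⊥ ∧
        sSup ((fun n : ℕ => ((n : ℕ∞) : WithBot ℕ∞)) '' A) = 0 := by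
  rw [WithBot.sSup_image_natCast A hA, ENat.biSup_natCast_eq_biSup_succ]
  rcases Set.eq_empty_or_nonempty {n | n + 1 ∈ A} with hB | hB
  · right
    rw [hB]
    simp
  · left
    rw [WithBot.sSup_image_natCast _ hB, ← ENat.biSup_add hB]
    rfl

section Degrees

variable {m : ℕ} {G : Type} [Group G] {k : Type} [Field k]

/-- The `S`-degrees of the objects at which `H_0^S(W) = W/𝔍_S W` is nonzero. -/
def h0SDegrees (S : Finset (Fin m)) (W : ModG m G k) : Set ℕ :=
  {n | ∃ x : FImG m G, ∑ j ∈ S, x.1.comp j = n ∧ Jsub m G k S W x ≠ ⊤}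

lemma tS_zero_eq (S : Finset (Fin m)) (W : ModG m G k) :
    tS m G k S 0 W = sSup ((fun n : ℕ => ((n : ℕ∞) : WithBot ℕ∞)) '' h0SDegrees S W) := by
  change sSup (((fun n : ℕ => ((n : ℕ∞) : WithBot ℕ∞)) ∘
    fun s : Fin m → ℕ => ∑ j ∈ S, s j) '' _) = _
  rw [Set.image_comp]
  congr 2
  ext n
  simp only [Set.mem_image, Set.mem_ofPred_eq, SliceNonzero, nontrivial_hiS_zero_obj_iff,
    h0SDegrees]
  constructor
  · rintro ⟨s, ⟨x, hxs, hx⟩, rfl⟩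
    exact ⟨x, Finset.sum_congr rfl hxs, hx⟩
  · rintro ⟨x, rfl, hx⟩
    exact ⟨x.1.comp, ⟨x, fun _ _ => rfl, hx⟩, rfl⟩

lemma h0SDegrees_dSfun (S : Finset (Fin m)) (V : ModG m G k) :
    h0SDegrees S ((DSfun m G k S).obj V) = {n | n + 1 ∈ h0SDegrees S V} := by
  ext n
  simp only [h0SDegrees, Set.mem_ofPred_eq, ne_eq, jsub_dSfun_eq_top_iff, not_forall]
  constructor
  · rintro ⟨x, rfl, i, hi, hx⟩
    refine ⟨_, ?_, hx⟩
    simp [sum_comp_addFG_obj, Finset.sum_pi_single', hi]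
  · rintro ⟨y, hy, hyV⟩
    obtain ⟨i, hi, hyi⟩ := Finset.exists_ne_zero_of_sum_ne_zero (hy.trans_ne n.succ_ne_zero)
    obtain ⟨x, rfl⟩ := exists_addFG_obj_eq (Pi.single i 1) y fun j => by
      rcases eq_or_ne j i with rfl | hj
      · simpa [Nat.one_le_iff_ne_zero] using hyi
      · simp [Pi.single_eq_of_ne hj]
    refine ⟨x, ?_, i, hi, hyV⟩
    simpa [sum_comp_addFG_obj, Finset.sum_pi_single', hi] using hy

lemma h0SDegrees_nonempty (S : Finset (Fin m)) {V : ModG m G k} (hV : ¬ IsZero V) :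
    (h0SDegrees S V).Nonempty := by
  obtain ⟨x₀, hx₀⟩ : ∃ x, Nontrivial (V.obj x) := by
    by_contra! h
    exact hV (Functor.isZero _ fun x => ModuleCat.isZero_iff_subsingleton.2 (h x))
  obtain ⟨x, hx, hmin⟩ := (InvImage.wf (fun x : FImG m G => ∑ j ∈ S, x.1.comp j)
    wellFounded_lt).has_min {x | Nontrivial (V.obj x)} ⟨x₀, hx₀⟩
  have : Nontrivial (V.obj x) := hx
  refine ⟨_, x, rfl, fun htop => ?_⟩
  have hbot : Jsub m G k S V x = ⊥ := by
    refine eq_bot_iff.2 (iSup_le fun y => iSup_le fun α => iSup_le fun hα => ?_)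
    have : Subsingleton (V.obj y) := not_nontrivial_iff_subsingleton.1 fun hy =>
      hmin y hy (by rw [degS_eq_sub] at hα; exact_mod_cast (sub_pos.1 hα))
    rintro _ ⟨v, rfl⟩
    simp [Subsingleton.elim v 0]
  exact top_ne_bot (htop.symm.trans hbot)

end Degrees

theorem FIm.t0_of_derivative_general (m : ℕ) (G : Type) [Group G]
    (k : Type) [Field k] (S : Finset (Fin m))
    (V : ModG m G k) (hne : ¬ IsZero V) :
    tS m G k S 0 V = tS m G k S 0 ((DSfun m G k S).obj V) + 1
    ∨ (tS m G k S 0 ((DSfun m G k S).obj V) = ⊥ ∧ tS m G k S 0 V = 0) := by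
  rw [tS_zero_eq, tS_zero_eq, h0SDegrees_dSfun]
  exact WithBot.sSup_image_natCast_eq_or _ (h0SDegrees_nonempty S hne)

theorem FIm.t0_of_derivative (m : ℕ) (hm : 0 < m) (G : Type) [Group G] [Finite G]
    (k : Type) [Field k] [CharZero k] (S : Finset (Fin m)) (hS : S.Nonempty)
    (V : ModG m G k) (hV : FinitelyGenerated m G k V) (hne : ¬ IsZero V) :
    tS m G k S 0 V = tS m G k S 0 ((DSfun m G k S).obj V) + 1
    ∨ (tS m G k S 0 ((DSfun m G k S).obj V) = ⊥ ∧ tS m G k S 0 V = 0) :=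
  FIm.t0_of_derivative_general m G k S V hne
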